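/- Copy Lemma: For any finitely-valued jointly distributed random variables (X, Y, A), there exists a probability space carrying jointly distributed (X, Y, A, A') such that (X, A) and (X, A') have the same joint distribution, and A' is conditionally independent of (Y, A) given X. -/

import Mathlib

open scoped BigOperators

namespace PaperIngleton

open Classical in
/-- Probability of an event under a pmf `p` on a finite sample space. -/
noncomputable def prob {Ω : Type*} [Fintype Ω] (p : Ω → ℝ) (E : Ω → Prop) : ℝ :=
  ∑ ω, if E ω then p ω else 0

/-- Shannon entropy of a finitely-valued random variable `X` under pmf `p`. -/
noncomputable def ent {Ω S : Type*} [Fintype Ω] [Fintype S] (p : Ω → ℝ) (X : Ω → S) : ℝ :=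
  -∑ s : S, prob p (fun ω => X ω = s) * Real.log (prob p (fun ω => X ω = s))

/-- Conditional entropy `H(X|Y)`. -/
noncomputable def condEnt {Ω S T : Type*} [Fintype Ω] [Fintype S] [Fintype T]
    (p : Ω → ℝ) (X : Ω → S) (Y : Ω → T) : ℝ :=
  ent p (fun ω => (X ω, Y ω)) - ent p Y

/-- Mutual information `I(X:Y)`. -/
noncomputable def mi {Ω S T : Type*} [Fintype Ω] [Fintype S] [Fintype T]
    (p : Ω → ℝ) (X : Ω → S) (Y : Ω → T) : ℝ :=
  ent p X + ent p Y - ent p (fun ω => (X ω, Y ω))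

/-- Conditional mutual information `I(X:Y|Z)`. -/
noncomputable def cmi {Ω S T U : Type*} [Fintype Ω] [Fintype S] [Fintype T] [Fintype U]
    (p : Ω → ℝ) (X : Ω → S) (Y : Ω → T) (Z : Ω → U) : ℝ :=
  ent p (fun ω => (X ω, Z ω)) + ent p (fun ω => (Y ω, Z ω))
    - ent p (fun ω => (X ω, Y ω, Z ω)) - ent p Z

end PaperIngleton

/-!
Take the sample space `Ω × U` with weight `p ω · P(A = a | X = X ω)`: the first coordinate
carries the original `(X, Y, A)`, and the second coordinate is a fresh sample of `A` drawn from
its conditional law given `X` alone. Summing out the fresh coordinate recovers `p`, and the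
weight of `{E, A'' = a}` for an event `E ⊆ {X = x}` factors as `P(E) · P(A = a | X = x)`,
which gives both the equality of laws and the conditional independence.
-/

namespace PaperIngleton

section Prob

variable {Ω U : Type*} [Fintype Ω]

lemma prob_nonneg {p : Ω → ℝ} (hp : ∀ ω, 0 ≤ p ω) (E : Ω → Prop) : 0 ≤ prob p E :=
  Finset.sum_nonneg fun ω _ => by split_ifs <;> simp [hp ω]

lemma prob_mono {p : Ω → ℝ} (hp : ∀ ω, 0 ≤ p ω) {E F : Ω → Prop} (h : ∀ ω, E ω → F ω) :
    prob p E ≤ prob p F :=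
  Finset.sum_le_sum fun ω _ => by split_ifs <;> simp_all

lemma le_prob {p : Ω → ℝ} (hp : ∀ ω, 0 ≤ p ω) {E : Ω → Prop} {ω : Ω} (hω : E ω) :
    p ω ≤ prob p E := by
  classical
  unfold prob
  have := Finset.single_le_sum (f := fun ω => if E ω then p ω else 0)
    (fun i _ => by split_ifs <;> simp [hp i]) (Finset.mem_univ ω)
  simpa [hω] using this

lemma prob_true (p : Ω → ℝ) : prob p (fun _ => True) = ∑ ω, p ω := by
  simp [prob]

lemma sum_prob_and_eq [Fintype U] (p : Ω → ℝ) (E : Ω → Prop) (A : Ω → U) :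
    ∑ a, prob p (fun ω => E ω ∧ A ω = a) = prob p E := by
  unfold prob
  rw [Finset.sum_comm]
  refine Finset.sum_congr rfl fun ω _ => ?_
  classical
  by_cases h : E ω <;> simp [h]

lemma prob_comp_fst [Fintype U] (q : Ω × U → ℝ) (E : Ω → Prop) :
    prob q (fun z => E z.1) = prob (fun ω => ∑ u, q (ω, u)) E := by
  unfold prob
  rw [Fintype.sum_prod_type]
  refine Finset.sum_congr rfl fun ω _ => ?_
  split_ifs <;> simp

lemma prob_comp_fst_and_snd_eq [Fintype U] (q : Ω × U → ℝ) (E : Ω → Prop) (a : U) :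
    prob q (fun z => E z.1 ∧ z.2 = a) = prob (fun ω => q (ω, a)) E := by
  unfold prob
  rw [Fintype.sum_prod_type]
  refine Finset.sum_congr rfl fun ω _ => ?_
  classical
  by_cases h : E ω <;> simp [h]

end Prob

section Copy

variable {Ω S U : Type*} [Fintype Ω]

/-- `P(A = a | X = x)`, with the junk value `0` when `P(X = x) = 0`. -/
noncomputable def condLaw (p : Ω → ℝ) (X : Ω → S) (A : Ω → U) (x : S) (a : U) : ℝ :=
  prob p (fun ω => X ω = x ∧ A ω = a) / prob p (fun ω => X ω = x)

noncomputable def copyPmf (p : Ω → ℝ) (X : Ω → S) (A : Ω → U) (z : Ω × U) : ℝ :=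
  p z.1 * condLaw p X A (X z.1) z.2

variable {p : Ω → ℝ} (X : Ω → S) (A : Ω → U)

lemma condLaw_nonneg (hp : ∀ ω, 0 ≤ p ω) (x : S) (a : U) : 0 ≤ condLaw p X A x a :=
  div_nonneg (prob_nonneg hp _) (prob_nonneg hp _)

lemma prob_mul_condLaw (hp : ∀ ω, 0 ≤ p ω) (x : S) (a : U) :
    prob p (fun ω => X ω = x) * condLaw p X A x a = prob p (fun ω => X ω = x ∧ A ω = a) := by
  rcases eq_or_ne (prob p (fun ω => X ω = x)) 0 with h | h
  · have hle := prob_mono hp (E := fun ω => X ω = x ∧ A ω = a) (fun _ hω => hω.1)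
    rw [h] at hle
    rw [h, zero_mul, le_antisymm hle (prob_nonneg hp _)]
  · exact mul_div_cancel₀ _ h

lemma mul_sum_condLaw [Fintype U] (hp : ∀ ω, 0 ≤ p ω) (ω : Ω) :
    p ω * ∑ a, condLaw p X A (X ω) a = p ω := by
  simp only [condLaw, ← Finset.sum_div, sum_prob_and_eq]
  rcases eq_or_ne (prob p (fun ω' => X ω' = X ω)) 0 with h | h
  · have hle := le_prob hp (E := fun ω' => X ω' = X ω) rfl
    rw [h] at hle
    rw [le_antisymm hle (hp ω), zero_mul]
  · rw [div_self h, mul_one]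

lemma copyPmf_nonneg (hp : ∀ ω, 0 ≤ p ω) (z : Ω × U) : 0 ≤ copyPmf p X A z :=
  mul_nonneg (hp z.1) (condLaw_nonneg X A hp _ _)

lemma prob_copyPmf_comp_fst [Fintype U] (hp : ∀ ω, 0 ≤ p ω) (E : Ω → Prop) :
    prob (copyPmf p X A) (fun z => E z.1) = prob p E := by
  rw [prob_comp_fst]
  congr 1
  funext ω
  exact (Finset.mul_sum _ _ _).symm.trans (mul_sum_condLaw X A hp ω)

lemma prob_copyPmf_comp_fst_and_snd_eq [Fintype U] {x : S} {E : Ω → Prop}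
    (hE : ∀ ω, E ω → X ω = x) (a : U) :
    prob (copyPmf p X A) (fun z => E z.1 ∧ z.2 = a) = prob p E * condLaw p X A x a := by
  rw [prob_comp_fst_and_snd_eq]
  unfold prob
  rw [Finset.sum_mul]
  refine Finset.sum_congr rfl fun ω _ => ?_
  by_cases h : E ω
  · simp [h, copyPmf, hE ω h]
  · simp [h]

end Copy

/-- Copy Lemma. -/
theorem stmt8 {Ω S T U : Type} [Fintype Ω] [Fintype S] [Fintype T] [Fintype U]
    (p : Ω → ℝ) (hp : ∀ ω, 0 ≤ p ω) (hp1 : ∑ ω, p ω = 1)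
    (X : Ω → S) (Y : Ω → T) (A : Ω → U) :
    ∃ (Ω' : Type) (_ : Fintype Ω') (p' : Ω' → ℝ)
      (X' : Ω' → S) (Y' : Ω' → T) (A' : Ω' → U) (A'' : Ω' → U),
      (∀ ω, 0 ≤ p' ω) ∧ (∑ ω, p' ω = 1) ∧
      -- the new (X',Y',A') has the original joint distribution
      (∀ x y a, prob p' (fun ω => X' ω = x ∧ Y' ω = y ∧ A' ω = a)
              = prob p (fun ω => X ω = x ∧ Y ω = y ∧ A ω = a)) ∧
      -- (X',A'') and (X',A') have the same joint distribution
      (∀ x a, prob p' (fun ω => X' ω = x ∧ A'' ω = a)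
            = prob p' (fun ω => X' ω = x ∧ A' ω = a)) ∧
      -- A'' is conditionally independent of (Y',A') given X'
      (∀ x y a a',
        prob p' (fun ω => X' ω = x ∧ Y' ω = y ∧ A' ω = a ∧ A'' ω = a')
          * prob p' (fun ω => X' ω = x)
        = prob p' (fun ω => X' ω = x ∧ Y' ω = y ∧ A' ω = a)
          * prob p' (fun ω => X' ω = x ∧ A'' ω = a')) := by
  refine ⟨Ω × U, inferInstance, copyPmf p X A, fun z => X z.1, fun z => Y z.1, fun z => A z.1,
    Prod.snd, copyPmf_nonneg X A hp, ?_,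
    fun x y a => prob_copyPmf_comp_fst X A hp (fun ω => X ω = x ∧ Y ω = y ∧ A ω = a),
    fun x a => ?_, fun x y a a' => ?_⟩
  · simpa only [prob_true, hp1] using prob_copyPmf_comp_fst X A hp (fun _ => True)
  · rw [prob_copyPmf_comp_fst_and_snd_eq X A (E := fun ω => X ω = x) (fun _ h => h),
      prob_copyPmf_comp_fst X A hp (fun ω => X ω = x ∧ A ω = a), prob_mul_condLaw X A hp]
  · have hassoc : (fun z : Ω × U => X z.1 = x ∧ Y z.1 = y ∧ A z.1 = a ∧ z.2 = a')
        = fun z => (X z.1 = x ∧ Y z.1 = y ∧ A z.1 = a) ∧ z.2 = a' := by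
      simp only [and_assoc]
    beta_reduce
    rw [hassoc, prob_copyPmf_comp_fst_and_snd_eq X A
        (E := fun ω => X ω = x ∧ Y ω = y ∧ A ω = a) (fun _ h => h.1),
      prob_copyPmf_comp_fst_and_snd_eq X A (E := fun ω => X ω = x) (fun _ h => h),
      prob_copyPmf_comp_fst X A hp (fun ω => X ω = x),
      prob_copyPmf_comp_fst X A hp (fun ω => X ω = x ∧ Y ω = y ∧ A ω = a)]
    ring

end PaperIngleton
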